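/- Let 0 < r < R, let g(t) = (√(1-t²) - t·arccos(t))/π, and let G : [r,R] → [0, G(r)] be G(x) = R·g(x/R) with inverse H. Then H is differentiable on (0, G(r)) and H'(y) ≍ -y^{-1/3} near y = 0; precisely, there exist constants 0 < c₁ ≤ c₂ and δ > 0 such that c₁·y^{-1/3} ≤ -H'(y) ≤ c₂·y^{-1/3} for all y ∈ (0, δ). -/

import Mathlib

noncomputable def g (t : ℝ) : ℝ := (Real.sqrt (1 - t^2) - t * Real.arccos t) / Real.pi

open Real Set

/-! With `t = cos θ` one has `g (cos θ) = (sin θ - θ cos θ) / π` and `g' = -arccos / π`. Hence, for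
`θ = arccos (H y / R)`, the inverse function theorem gives `-H' y = π / θ`, while
`y = (R / π) (sin θ - θ cos θ)`. Taylor bounds for `sin` and `cos` place `sin θ - θ cos θ` between
`11/48 θ³` and `7/16 θ³` for `0 < θ ≤ 1`, so `θ ≍ y^(1/3)` and `-H' y ≍ y^(-1/3)`. -/

section LeftInverse

variable {f H : ℝ → ℝ} {a b : ℝ}

theorem Set.LeftInvOn.mapsTo_Ioo (hab : a ≤ b) (hf : ContinuousOn f (Icc a b))
    (hH : LeftInvOn H f (Icc a b)) : MapsTo H (Ioo (f b) (f a)) (Ioo a b) := by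
  intro y hy
  obtain ⟨x, hx, rfl⟩ := intermediate_value_Ioo' hab hf hy
  rwa [hH (Ioo_subset_Icc_self hx)]

theorem Set.LeftInvOn.rightInvOn_Ioo (hab : a ≤ b) (hf : ContinuousOn f (Icc a b))
    (hH : LeftInvOn H f (Icc a b)) : RightInvOn H f (Ioo (f b) (f a)) := by
  intro y hy
  obtain ⟨x, hx, rfl⟩ := intermediate_value_Ioo' hab hf hy
  rw [hH (Ioo_subset_Icc_self hx)]

theorem Set.LeftInvOn.continuousAt_of_strictAntiOn (hab : a ≤ b)
    (hf : ContinuousOn f (Icc a b)) (hanti : StrictAntiOn f (Icc a b))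
    (hH : LeftInvOn H f (Icc a b)) {y : ℝ} (hy : y ∈ Ioo (f b) (f a)) : ContinuousAt H y := by
  have hmaps := hH.mapsTo_Ioo hab hf
  have hright := hH.rightInvOn_Ioo hab hf
  have hmono : MonotoneOn (-H) (Ioo (f b) (f a)) := by
    intro y₁ hy₁ y₂ hy₂ hy
    rw [Pi.neg_apply, Pi.neg_apply, neg_le_neg_iff,
      ← hanti.le_iff_ge (Ioo_subset_Icc_self (hmaps hy₁)) (Ioo_subset_Icc_self (hmaps hy₂)),
      hright hy₁, hright hy₂]
    exact hy
  have himage : Ioo (-b) (-a) ⊆ (-H) '' Ioo (f b) (f a) := by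
    intro w hw
    have hw' : -w ∈ Icc a b := ⟨by linarith [hw.2], by linarith [hw.1]⟩
    refine ⟨f (-w), ⟨hanti hw' ⟨hab, le_rfl⟩ (by linarith [hw.1]),
      hanti ⟨le_rfl, hab⟩ hw' (by linarith [hw.2])⟩, by simp [hH hw']⟩
  have hHy : (-H) y ∈ Ioo (-b) (-a) := by
    simp only [Pi.neg_apply, mem_Ioo, neg_lt_neg_iff]
    exact (hmaps hy).symm
  have hcont := continuousAt_of_monotoneOn_of_image_mem_nhds hmono (isOpen_Ioo.mem_nhds hy)
    (Filter.mem_of_superset (isOpen_Ioo.mem_nhds hHy) himage)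
  simpa only [neg_neg] using hcont.neg

theorem Set.LeftInvOn.hasDerivAt_of_strictAntiOn {f' : ℝ → ℝ} (hab : a ≤ b)
    (hf : ContinuousOn f (Icc a b)) (hanti : StrictAntiOn f (Icc a b))
    (hderiv : ∀ x ∈ Ioo a b, HasDerivAt f (f' x) x) (hf' : ∀ x ∈ Ioo a b, f' x ≠ 0)
    (hH : LeftInvOn H f (Icc a b)) {y : ℝ} (hy : y ∈ Ioo (f b) (f a)) :
    HasDerivAt H (f' (H y))⁻¹ y :=
  have hHy := hH.mapsTo_Ioo hab hf hy
  (hderiv _ hHy).of_local_left_inverse (hH.continuousAt_of_strictAntiOn hab hf hanti hy)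
    (hf' _ hHy) (Filter.eventually_of_mem (isOpen_Ioo.mem_nhds hy) (hH.rightInvOn_Ioo hab hf))

end LeftInverse

theorem mul_rpow_inv_natCast_le_inv {a y θ : ℝ} {n : ℕ} (hn : n ≠ 0) (ha : 0 < a) (hθ : 0 < θ)
    (h : a * θ ^ n ≤ y) : a ^ (n⁻¹ : ℝ) * y ^ (-(n⁻¹ : ℝ)) ≤ θ⁻¹ := by
  have hy : 0 < y := lt_of_lt_of_le (by positivity) h
  have hroot : a ^ (n⁻¹ : ℝ) * θ ≤ y ^ (n⁻¹ : ℝ) := by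
    calc a ^ (n⁻¹ : ℝ) * θ = (a * θ ^ n) ^ (n⁻¹ : ℝ) := by
          rw [mul_rpow ha.le (by positivity), pow_rpow_inv_natCast hθ.le hn]
      _ ≤ y ^ (n⁻¹ : ℝ) := by gcongr
  rw [rpow_neg hy.le, ← div_eq_mul_inv, div_le_iff₀ (by positivity)]
  rwa [le_inv_mul_iff₀ hθ, mul_comm]

theorem inv_le_mul_rpow_inv_natCast {b y θ : ℝ} {n : ℕ} (hn : n ≠ 0) (hy : 0 < y) (hθ : 0 < θ)
    (h : y ≤ b * θ ^ n) : θ⁻¹ ≤ b ^ (n⁻¹ : ℝ) * y ^ (-(n⁻¹ : ℝ)) := by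
  have hb : 0 < b := pos_of_mul_pos_left (hy.trans_le h) (by positivity)
  have hroot : y ^ (n⁻¹ : ℝ) ≤ b ^ (n⁻¹ : ℝ) * θ := by
    calc y ^ (n⁻¹ : ℝ) ≤ (b * θ ^ n) ^ (n⁻¹ : ℝ) := by gcongr
      _ = b ^ (n⁻¹ : ℝ) * θ := by
          rw [mul_rpow hb.le (by positivity), pow_rpow_inv_natCast hθ.le hn]
  rw [rpow_neg hy.le, ← div_eq_mul_inv, le_div_iff₀ (by positivity)]
  rwa [inv_mul_le_iff₀ hθ, mul_comm]

theorem continuous_g : Continuous g := by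
  unfold g
  fun_prop

theorem hasDerivAt_g {t : ℝ} (h₁ : -1 < t) (h₂ : t < 1) :
    HasDerivAt g (-arccos t / π) t := by
  have hpos : 0 < 1 - t ^ 2 := by nlinarith
  have hsqrt : HasDerivAt (fun t : ℝ => √(1 - t ^ 2)) (-(2 * t) / (2 * √(1 - t ^ 2))) t := by
    simpa using ((hasDerivAt_pow 2 t).const_sub 1).sqrt hpos.ne'
  have harccos := (hasDerivAt_id t).mul (hasDerivAt_arccos h₁.ne' h₂.ne)
  refine ((hsqrt.sub harccos).div_const π).congr_deriv ?_
  field_simp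
  rw [id]
  ring

theorem g_one : g 1 = 0 := by
  simp [g]

theorem strictAntiOn_g : StrictAntiOn g (Icc (-1) 1) := by
  refine strictAntiOn_of_deriv_neg (convex_Icc _ _) continuous_g.continuousOn fun t ht => ?_
  rw [interior_Icc] at ht
  rw [(hasDerivAt_g ht.1 ht.2).deriv]
  exact div_neg_of_neg_of_pos (neg_neg_of_pos (arccos_pos.2 ht.2)) pi_pos

theorem g_cos {θ : ℝ} (h₀ : 0 ≤ θ) (hπ : θ ≤ π) : g (cos θ) = (sin θ - θ * cos θ) / π := by
  rw [g, ← sin_arccos, arccos_cos h₀ hπ, mul_comm]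

theorem cube_mul_le_sin_sub_mul_cos {θ : ℝ} (h₀ : 0 < θ) (h₁ : θ ≤ 1) :
    11 / 48 * θ ^ 3 ≤ sin θ - θ * cos θ := by
  have habs : |θ| ≤ 1 := by rwa [abs_of_pos h₀]
  have hs := abs_le.1 (sin_bound habs)
  have hc := abs_le.1 (cos_bound habs)
  rw [abs_of_pos h₀] at hs hc
  have h4 : θ ^ 4 ≤ θ ^ 3 := by nlinarith
  have h5 : θ ^ 5 ≤ θ ^ 3 := by nlinarith
  nlinarith [mul_le_mul_of_nonneg_left hc.2 h₀.le]

theorem sin_sub_mul_cos_le_cube_mul {θ : ℝ} (h₀ : 0 < θ) (h₁ : θ ≤ 1) :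
    sin θ - θ * cos θ ≤ 7 / 16 * θ ^ 3 := by
  have habs : |θ| ≤ 1 := by rwa [abs_of_pos h₀]
  have hs := abs_le.1 (sin_bound habs)
  have hc := abs_le.1 (cos_bound habs)
  rw [abs_of_pos h₀] at hs hc
  have h4 : θ ^ 4 ≤ θ ^ 3 := by nlinarith
  have h5 : θ ^ 5 ≤ θ ^ 3 := by nlinarith
  nlinarith [mul_le_mul_of_nonneg_left hc.1 h₀.le]

noncomputable def G (R x : ℝ) : ℝ := R * g (x / R)

section G

variable {R : ℝ}

theorem continuous_G : Continuous (G R) :=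
  continuous_const.mul (continuous_g.comp (continuous_id.div_const R))

theorem G_self (hR : R ≠ 0) : G R R = 0 := by
  rw [G, div_self hR, g_one, mul_zero]

theorem div_mem_Icc_of_mem_Icc (hR : 0 < R) {x : ℝ} (hx : x ∈ Icc (-R) R) :
    x / R ∈ Icc (-1) 1 :=
  ⟨by rw [le_div_iff₀ hR]; linarith [hx.1], by rw [div_le_one hR]; exact hx.2⟩

theorem hasDerivAt_G (hR : 0 < R) {x : ℝ} (hx : x ∈ Ioo (-R) R) :
    HasDerivAt (G R) (-arccos (x / R) / π) x := by
  have ht₁ : -1 < x / R := by rw [lt_div_iff₀ hR]; linarith [hx.1]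
  have ht₂ : x / R < 1 := by rw [div_lt_one hR]; exact hx.2
  have hdiv := (hasDerivAt_id x).div_const R
  refine (((hasDerivAt_g ht₁ ht₂).comp x hdiv).const_mul R).congr_deriv ?_
  field_simp

theorem strictAntiOn_G (hR : 0 < R) : StrictAntiOn (G R) (Icc (-R) R) := fun _ hx _ hy hxy =>
  mul_lt_mul_of_pos_left (strictAntiOn_g (div_mem_Icc_of_mem_Icc hR hx)
    (div_mem_Icc_of_mem_Icc hR hy) (div_lt_div_of_pos_right hxy hR)) hR

theorem G_pos (hR : 0 < R) {x : ℝ} (hx : x ∈ Ico (-R) R) : 0 < G R x :=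
  G_self hR.ne' ▸ strictAntiOn_G hR (Ico_subset_Icc_self hx) ⟨by linarith, le_rfl⟩ hx.2

end G

section Inverse

variable {r R : ℝ} {H : ℝ → ℝ}

theorem Set.LeftInvOn.inverse_G_spec (hr : -R ≤ r) (hrR : r < R)
    (hH : LeftInvOn H (G R) (Icc r R)) {y : ℝ} (hy : y ∈ Ioo 0 (G R r)) :
    H y ∈ Ioo r R ∧ G R (H y) = y ∧ HasDerivAt H (-arccos (H y / R) / π)⁻¹ y := by
  have hR : 0 < R := by linarith
  have hcont := continuous_G (R := R) |>.continuousOn (s := Icc r R)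
  have hanti := (strictAntiOn_G hR).mono (Icc_subset_Icc hr le_rfl)
  rw [← G_self hR.ne'] at hy
  refine ⟨hH.mapsTo_Ioo hrR.le hcont hy, hH.rightInvOn_Ioo hrR.le hcont hy,
    hH.hasDerivAt_of_strictAntiOn hrR.le hcont hanti
      (fun x hx => hasDerivAt_G hR ⟨by linarith [hx.1], hx.2⟩) (fun x hx => ?_) hy⟩
  exact div_ne_zero (neg_ne_zero.2 (arccos_pos.2 ((div_lt_one hR).2 hx.2)).ne') pi_ne_zero

theorem Set.LeftInvOn.exists_angle_neg_deriv_eq (hr : -R ≤ r) (hrR : r < R)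
    (hH : LeftInvOn H (G R) (Icc r R)) {y : ℝ} (hy : y ∈ Ioo 0 (G R r))
    (hy₁ : y < G R (R * cos 1)) :
    ∃ θ, 0 < θ ∧ θ ≤ 1 ∧ y = R / π * (sin θ - θ * cos θ) ∧ -deriv H y = π * θ⁻¹ := by
  have hR : 0 < R := by linarith
  obtain ⟨hx, hGx, hderiv⟩ := hH.inverse_G_spec hr hrR hy
  have hcos₁ : cos 1 ∈ Icc (-1) 1 := ⟨neg_one_le_cos 1, cos_le_one 1⟩
  have ht : H y / R ∈ Icc (-1) 1 := div_mem_Icc_of_mem_Icc hR ⟨by linarith [hx.1], hx.2.le⟩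
  have ht₁ : H y / R < 1 := (div_lt_one hR).2 hx.2
  have ht₀ : cos 1 < H y / R := by
    have hlt : G R (H y) < G R (R * cos 1) := by rwa [hGx]
    rw [G, G, mul_div_cancel_left₀ _ hR.ne'] at hlt
    exact (strictAntiOn_g.lt_iff_gt ht hcos₁).1 (lt_of_mul_lt_mul_left hlt hR.le)
  refine ⟨arccos (H y / R), arccos_pos.2 ht₁, ?_, ?_, ?_⟩
  · calc arccos (H y / R) ≤ arccos (cos 1) := arccos_le_arccos ht₀.le
      _ = 1 := arccos_cos zero_le_one (by linarith [pi_gt_three])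
  · refine hGx.symm.trans ?_
    rw [G, div_mul_comm, mul_comm, ← g_cos (arccos_nonneg _) (arccos_le_pi _),
      cos_arccos ht.1 ht.2]
  · rw [hderiv.deriv, neg_div, inv_neg, neg_neg, inv_div, div_eq_mul_inv]

end Inverse

theorem H_deriv_blowup (r R : ℝ) (hr : 0 < r) (hrR : r < R) (H : ℝ → ℝ)
    (hH : ∀ x ∈ Set.Icc r R, H (R * g (x / R)) = x) :
    (∀ y ∈ Set.Ioo 0 (R * g (r / R)), DifferentiableAt ℝ H y) ∧
    ∃ c₁ > (0:ℝ), ∃ c₂ : ℝ, c₁ ≤ c₂ ∧ ∃ δ > (0:ℝ), ∀ y ∈ Set.Ioo (0:ℝ) δ,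
      c₁ * y ^ (-(1:ℝ)/3) ≤ -(deriv H y) ∧ -(deriv H y) ≤ c₂ * y ^ (-(1:ℝ)/3) := by
  have hR : 0 < R := hr.trans hrR
  have hr' : -R ≤ r := by linarith
  have hHG : LeftInvOn H (G R) (Icc r R) := fun x hx => hH x hx
  refine ⟨fun y hy => (hHG.inverse_G_spec hr' hrR hy).2.2.differentiableAt, ?_⟩
  refine ⟨π * (11 / 48 * (R / π)) ^ (3⁻¹ : ℝ), by positivity, π * (7 / 16 * (R / π)) ^ (3⁻¹ : ℝ),
    by gcongr π * (?_ * _) ^ _; norm_num, min (G R r) (G R (R * cos 1)),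
    lt_min (G_pos hR ⟨hr', hrR⟩) (G_pos hR ⟨?_, ?_⟩), fun y hy => ?_⟩
  · nlinarith [neg_one_le_cos 1]
  · nlinarith [cos_one_le]
  obtain ⟨θ, hθ₀, hθ₁, hyθ, hderiv⟩ := hHG.exists_angle_neg_deriv_eq hr' hrR
    ⟨hy.1, hy.2.trans_le (min_le_left _ _)⟩ (hy.2.trans_le (min_le_right _ _))
  have hlo := mul_rpow_inv_natCast_le_inv (a := 11 / 48 * (R / π)) (y := y) three_ne_zero
    (by positivity) hθ₀
    (by rw [hyθ]; nlinarith [cube_mul_le_sin_sub_mul_cos hθ₀ hθ₁, (by positivity : 0 < R / π)])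
  have hhi := inv_le_mul_rpow_inv_natCast (b := 7 / 16 * (R / π)) three_ne_zero hy.1 hθ₀
    (by rw [hyθ]; nlinarith [sin_sub_mul_cos_le_cube_mul hθ₀ hθ₁, (by positivity : 0 < R / π)])
  simp only [Nat.cast_ofNat] at hlo hhi
  rw [hderiv, neg_div, one_div, mul_assoc, mul_assoc]
  exact ⟨mul_le_mul_of_nonneg_left hlo pi_pos.le, mul_le_mul_of_nonneg_left hhi pi_pos.le⟩
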